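/- There exists a continuous function f : O → ℝ whose Taibleson variation is infinite: V_Taib(f) = +∞. (Hence the converse of the regularity property of finite Taibleson variation fails.) -/

import Mathlib

/-!
The discs `D k = {x : |x - π^k| ≤ q^(-k-1)}` lie in the distinct spheres `|x| = q^(-k)`, so they
are pairwise disjoint. Put a bump of height `1/(k+1)` on the subdisc `E k ⊆ D k` of radius
`q^(-k-2)` around `π^k`. The bumps have disjoint clopen supports and heights tending to `0`, so
their sum `f` is continuous, while `f` oscillates by `1/(k+1)` on `D k` (compare `π^k` with
`π^k + π^(k+1)`). Since `O` is compact, finitely many disjoint discs always extend to a Taibleson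
partition, hence `V_Taib(f) ≥ ∑_{k<N} 1/(k+1)` for every `N`.
-/

open MeasureTheory Set Filter Topology
open scoped ENNReal NNReal

noncomputable section

namespace NAKoksma

variable (K : Type*) [NontriviallyNormedField K] [IsUltrametricDist K]

/-- The ring of integers `O = {x : K | ‖x‖ ≤ 1}` of a non-Archimedean normed field. -/
def RoI : Subring K where
  carrier := {x : K | ‖x‖ ≤ 1}
  mul_mem' := fun {a b} ha hb => by
    simp only [Set.mem_setOf_eq] at *
    calc ‖a * b‖ = ‖a‖ * ‖b‖ := norm_mul a b
      _ ≤ 1 * 1 := mul_le_mul ha hb (norm_nonneg b) zero_le_one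
      _ = 1 := one_mul 1
  one_mem' := by simp
  add_mem' := fun {a b} ha hb => by
    simp only [Set.mem_setOf_eq] at *
    exact (IsUltrametricDist.norm_add_le_max a b).trans (max_le ha hb)
  zero_mem' := by simp
  neg_mem' := fun {a} ha => by
    simp only [Set.mem_setOf_eq, norm_neg] at *
    exact ha

variable (q : ℕ)

/-- The disc of radius `q ^ (-n)` centered at `a` in the ring of integers. -/
def disc (a : RoI K) (n : ℕ) : Set (RoI K) :=
  {x : RoI K | ‖(x : K) - (a : K)‖ ≤ (q : ℝ) ^ (-(n : ℤ))}

/-- A subset of `O` is a disc if it is of the form `D_r(a)` with `r = q^(-n)`, `0 < r ≤ 1`. -/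
def IsDisc (D : Set (RoI K)) : Prop := ∃ (a : RoI K) (n : ℕ), D = disc K q a n

/-- A Taibleson partition: a finite collection of discs partitioning `O`. -/
def IsTaibPartition (P : Finset (Set (RoI K))) : Prop :=
  (∀ D ∈ P, IsDisc K q D) ∧ (P : Set (Set (RoI K))).PairwiseDisjoint id ∧
    ⋃₀ (P : Set (Set (RoI K))) = Set.univ

/-- `V_Π(f) = Σ_{D ∈ Π} sup_{x,y ∈ D} (f x - f y)`, valued in `[0,∞]`. -/
def VPi (f : RoI K → ℝ) (P : Finset (Set (RoI K))) : ℝ≥0∞ :=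
  ∑ D ∈ P, ⨆ x ∈ D, ⨆ y ∈ D, ENNReal.ofReal (f x - f y)

/-- The Taibleson variation `V_Taib(f) = sup_Π V_Π(f)`. -/
def VTaib (f : RoI K → ℝ) : ℝ≥0∞ :=
  ⨆ P : {P : Finset (Set (RoI K)) // IsTaibPartition K q P}, VPi K f P.1

variable [MeasurableSpace K]

/-- The discrepancy `Δ(X) = sup_D | |X ∩ D| / |X| - μ(D) |` of a finite set `X ⊆ O`. -/
def discrepancy (μ : Measure (RoI K)) (X : Finset (RoI K)) : ℝ :=
  ⨆ D : {D : Set (RoI K) // IsDisc K q D},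
    |(Nat.card ↥((X : Set (RoI K)) ∩ D.1) : ℝ) / (X.card : ℝ) - (μ D.1).toReal|

variable (π : RoI K)

/-- The `i`-th point `m_i = a_0 + a_1 π + ⋯ + a_{λ-1} π^{λ-1}` in the dictionary
ordering of the coefficient strings `(a_0, …, a_{λ-1})` with respect to the
indexing of the coset representatives `S`. -/
def beerPoint (S : ℕ → RoI K) (lam i : ℕ) : RoI K :=
  ∑ j ∈ Finset.range lam, S (i / q ^ (lam - 1 - j) % q) * π ^ j

/-- `V_λ(f) = sup_{x_i ∈ E_i} Σ_{i=1}^{q^λ - 1} |f(x_i) - f(x_{i-1})|` over the ordered Beer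
partition `E_0, …, E_{q^λ - 1}` of level `λ`. -/
def VBeerLevel (S : ℕ → RoI K) (f : RoI K → ℝ) (lam : ℕ) : ℝ≥0∞ :=
  ⨆ x : {x : ℕ → RoI K // ∀ i < q ^ lam, x i ∈ disc K q (beerPoint K q π S lam i) lam},
    ∑ i ∈ Finset.Ico 1 (q ^ lam), ENNReal.ofReal |f (x.1 i) - f (x.1 (i - 1))|

/-- The Beer variation `V_Beer(f) = lim_{λ→∞} V_λ(f) = sup_{λ ≥ 1} V_λ(f)`. -/
def VBeer (S : ℕ → RoI K) (f : RoI K → ℝ) : ℝ≥0∞ :=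
  ⨆ lam : ℕ, VBeerLevel K q π S f (lam + 1)

/-- `S : ℕ → O` (through indices `0, …, q-1`) is a complete ordered system of coset
representatives for the residue field `O/πO`, containing `0`. -/
def IsRepSystem (S : ℕ → RoI K) : Prop :=
  (∃ i, i < q ∧ S i = 0) ∧
    Function.Bijective fun i : Fin q => Ideal.Quotient.mk (Ideal.span {π}) (S (i : ℕ))

/-- The Berkovich-analytic variation
`V_Berk(f) = Σ_D Σ_{D' ≺ D} |f(D') - f(D)|`, where `D' ≺ D` means `D' ⊆ D` and
`μ(D') = μ(D)/q`, and `f(D)` denotes the average of `f` over `D`. -/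
def VBerk (μ : Measure (RoI K)) (f : RoI K → ℝ) : ℝ≥0∞ :=
  ∑' D : {D : Set (RoI K) // IsDisc K q D},
    ∑' D' : {D' : Set (RoI K) // IsDisc K q D' ∧ D' ⊆ D.1 ∧ μ D' = μ D.1 / (q : ℝ≥0∞)},
      ENNReal.ofReal |(⨍ x in D'.1, f x ∂μ) - ⨍ x in D.1, f x ∂μ|

/-- The level `ℓ(γ)` of a character `γ : O → 𝕋`: the least `ℓ ≥ 0` such that `γ` is trivial
on `π^ℓ O`. -/
def charLevel (γ : AddChar (RoI K) Circle) : ℕ :=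
  sInf {l : ℕ | ∀ y : RoI K, γ (π ^ l * y) = 1}

/-- The Fourier coefficient `f̂(γ) = ∫_O f(x) conj(γ(x)) dμ(x)`. -/
def fourierCoeff (μ : Measure (RoI K)) (f : RoI K → ℂ) (γ : AddChar (RoI K) Circle) : ℂ :=
  ∫ x, f x * (starRingEnd ℂ) ((γ x : Circle) : ℂ) ∂μ

/-- The Fourier-analytic variation `V_Fourier(f) = Σ_{γ ≠ γ₀} q^{ℓ(γ)} |f̂(γ)|`, the sum over
all nontrivial continuous characters of `O`. -/
def VFourier (μ : Measure (RoI K)) (f : RoI K → ℝ) : ℝ≥0∞ :=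
  ∑' γ : {γ : AddChar (RoI K) Circle // Continuous ⇑γ ∧ γ ≠ 1},
    ENNReal.ofReal ((q : ℝ) ^ charLevel K π γ.1 * ‖fourierCoeff K μ (fun x => (f x : ℂ)) γ.1‖)

/-- A function is a finite linear combination of characteristic functions of discs. -/
def IsDiscSimple (g : RoI K → ℝ) : Prop :=
  ∃ (P : Finset (Set (RoI K))) (c : Set (RoI K) → ℝ),
    (∀ D ∈ P, IsDisc K q D) ∧ g = fun x => ∑ D ∈ P, c D * D.indicator 1 x

/-- Integrability in the sense of Beer: `f` can be squeezed between finite linear combinations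
of characteristic functions of discs with integrals converging to each other. -/
def BeerIntegrable [MeasurableSpace K] (μ : Measure (RoI K)) (f : RoI K → ℝ) : Prop :=
  ∃ u v : ℕ → RoI K → ℝ,
    (∀ n, IsDiscSimple K q (u n)) ∧ (∀ n, IsDiscSimple K q (v n)) ∧
    (∀ n x, u n x ≤ f x ∧ f x ≤ v n x) ∧
    Tendsto (fun n => ∫ x, (v n x - u n x) ∂μ) atTop (𝓝 0)

end NAKoksma

section IndicatorSum

open Function

variable {X : Type*}

theorem tsum_indicator_apply_of_mem {ι M : Type*} [AddCommMonoid M] [TopologicalSpace M]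
    {E : ι → Set X} (hE : Pairwise (Disjoint on E)) (a : ι → M) {x : X} {j : ι}
    (hx : x ∈ E j) :
    ∑' k, (E k).indicator (fun _ => a k) x = a j := by
  rw [tsum_eq_single j fun k hk =>
      Set.indicator_of_notMem (Set.disjoint_left.mp (hE hk.symm) hx) _,
    Set.indicator_of_mem hx]

theorem continuous_tsum_indicator [TopologicalSpace X] {M : Type*} [SeminormedAddCommGroup M]
    {E : ℕ → Set X} (hE : ∀ k, IsClopen (E k)) (hdisj : Pairwise (Disjoint on E))
    {a : ℕ → M} (ha : Tendsto a atTop (𝓝 0)) :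
    Continuous fun x => ∑' k, (E k).indicator (fun _ => a k) x := by
  classical
  set S : ℕ → X → M := fun N x => ∑ k ∈ Finset.range N, (E k).indicator (fun _ => a k) x
  have hS : ∀ N, Continuous (S N) := fun N =>
    continuous_finsetSum _ fun k _ => (hE k).continuous_indicator continuous_const
  refine TendstoUniformly.continuous (p := atTop) (F := S) ?_ (Eventually.of_forall hS).frequently
  -- at each point at most one term is nonzero, so `S N` is off by at most one `a k` with `N ≤ k`
  rw [Metric.tendstoUniformly_iff]
  intro ε hε
  obtain ⟨N₀, hN₀⟩ := Metric.tendsto_atTop.mp ha ε hε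
  filter_upwards [eventually_ge_atTop N₀] with N hN x
  by_cases hx : ∃ j, x ∈ E j
  · obtain ⟨j, hj⟩ := hx
    have hterm : ∀ k, (E k).indicator (fun _ => a k) x = if k = j then a j else 0 := fun k => by
      split_ifs with hk
      · exact hk ▸ Set.indicator_of_mem hj _
      · exact Set.indicator_of_notMem (Set.disjoint_left.mp (hdisj (Ne.symm hk)) hj) _
    simp only [S, hterm, tsum_ite_eq, Finset.sum_ite_eq', Finset.mem_range]
    split_ifs with hjN
    · simpa using hε
    · simpa [dist_comm] using hN₀ j (by omega)
  · simpa [S, Set.indicator_of_notMem (not_exists.mp hx _)] using hε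

end IndicatorSum

namespace NAKoksma

open Function

variable {K : Type*} [NontriviallyNormedField K] [IsUltrametricDist K] {q : ℕ}

instance [LocallyCompactSpace K] : CompactSpace (RoI K) := by
  have := ProperSpace.of_nontriviallyNormedField_of_weaklyLocallyCompactSpace K
  have h : IsCompact (RoI K : Set K) := by
    simpa [RoI, Metric.closedBall, dist_eq_norm] using isCompact_closedBall (0 : K) 1
  exact isCompact_iff_compactSpace.mp h

theorem disc_eq_closedBall (a : RoI K) (n : ℕ) :
    disc K q a n = Metric.closedBall a ((q : ℝ) ^ (-(n : ℤ))) := by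
  ext x
  simp [disc, dist_eq_norm]

theorem isClopen_disc (hq : 0 < q) (a : RoI K) (n : ℕ) : IsClopen (disc K q a n) := by
  rw [disc_eq_closedBall]
  exact IsUltrametricDist.isClopen_closedBall a (by positivity)

theorem mem_disc_self (hq : 0 < q) (a : RoI K) (n : ℕ) : a ∈ disc K q a n := by
  rw [disc_eq_closedBall]
  exact Metric.mem_closedBall_self (by positivity)

theorem disc_subset_disc (hq : 1 ≤ q) (a : RoI K) {m n : ℕ} (hmn : m ≤ n) :
    disc K q a n ⊆ disc K q a m := by
  simp only [disc_eq_closedBall]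
  exact Metric.closedBall_subset_closedBall
    (zpow_le_zpow_right₀ (by exact_mod_cast hq) (by omega))

theorem disc_subset_of_not_disjoint (hq : 1 ≤ q) {a b : RoI K} {m n : ℕ} (hmn : m ≤ n)
    (h : ¬Disjoint (disc K q a n) (disc K q b m)) : disc K q a n ⊆ disc K q b m := by
  obtain ⟨z, hza, hzb⟩ := Set.not_disjoint_iff.mp h
  rw [disc_eq_closedBall] at hza hzb
  rw [disc_eq_closedBall, disc_eq_closedBall, IsUltrametricDist.closedBall_eq_of_mem hza,
    IsUltrametricDist.closedBall_eq_of_mem hzb, ← disc_eq_closedBall, ← disc_eq_closedBall]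
  exact disc_subset_disc hq z hmn

theorem exists_isTaibPartition_of_level [CompactSpace (RoI K)] (hq : 0 < q) (n : ℕ) :
    ∃ P, IsTaibPartition K q P ∧ ∀ D ∈ P, ∃ a, D = disc K q a n := by
  classical
  obtain ⟨t, -, ht⟩ := isCompact_univ.elim_nhds_subcover (fun a => disc K q a n)
    fun a _ => (isClopen_disc hq a n).isOpen.mem_nhds (mem_disc_self hq a n)
  refine ⟨t.image (disc K q · n), ⟨?_, ?_, ?_⟩, ?_⟩
  · simp only [Finset.mem_image]
    rintro _ ⟨a, -, rfl⟩
    exact ⟨a, n, rfl⟩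
  · simp only [Finset.coe_image]
    rintro _ ⟨a, -, rfl⟩ _ ⟨b, -, rfl⟩ hab
    simp only [disc_eq_closedBall] at hab ⊢
    exact (IsUltrametricDist.closedBall_eq_or_disjoint a b _).resolve_left hab
  · simpa [Set.sUnion_image, Set.eq_univ_iff_forall] using ht
  · simp only [Finset.mem_image]
    rintro _ ⟨a, -, rfl⟩
    exact ⟨a, rfl⟩

/-- Take the discs of a level finer than every disc of `F`: each of them lies inside a disc of `F`
or misses all of them, and the latter complete `F` to a partition. -/
theorem exists_isTaibPartition_superset [CompactSpace (RoI K)] (hq : 1 ≤ q)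
    (F : Finset (Set (RoI K))) (hF : ∀ D ∈ F, IsDisc K q D)
    (hdisj : (F : Set (Set (RoI K))).PairwiseDisjoint id) :
    ∃ P, IsTaibPartition K q P ∧ F ⊆ P := by
  classical
  obtain ⟨n, hn⟩ : ∃ n, ∀ D ∈ F, ∃ b, ∃ m ≤ n, D = disc K q b m := by
    refine (Filter.eventually_all_finset F).mpr (fun D hD => ?_) |>.exists (f := atTop)
    obtain ⟨b, m, rfl⟩ := hF D hD
    filter_upwards [eventually_ge_atTop m] with n hmn using ⟨b, m, hmn, rfl⟩
  obtain ⟨U, ⟨hUdisc, hUdisj, hUcover⟩, hUn⟩ :=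
    exists_isTaibPartition_of_level (K := K) hq n
  set G := U.filter fun D => ∀ E ∈ F, Disjoint D E
  refine ⟨F ∪ G, ⟨?_, ?_, ?_⟩, Finset.subset_union_left⟩
  · intro D hD
    rcases Finset.mem_union.mp hD with hD | hD
    exacts [hF D hD, hUdisc D (Finset.mem_filter.mp hD).1]
  · rw [Finset.coe_union, Set.pairwiseDisjoint_union]
    refine ⟨hdisj, hUdisj.subset (Finset.coe_subset.mpr (Finset.filter_subset _ _)),
      fun D hD D' hD' _ => ((Finset.mem_filter.mp hD').2 D hD).symm⟩
  · refine Set.eq_univ_iff_forall.mpr fun x => ?_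
    obtain ⟨D, hDU, hxD⟩ := Set.mem_sUnion.mp (hUcover ▸ Set.mem_univ x)
    rw [Finset.mem_coe] at hDU
    by_cases hD : ∀ E ∈ F, Disjoint D E
    · exact ⟨D, Finset.mem_union_right F (Finset.mem_filter.mpr ⟨hDU, hD⟩), hxD⟩
    obtain ⟨E, hEF, hDE⟩ : ∃ E ∈ F, ¬Disjoint D E := by simpa using hD
    obtain ⟨a, rfl⟩ := hUn D hDU
    obtain ⟨b, m, hmn, rfl⟩ := hn E hEF
    exact ⟨_, by simp [hEF], disc_subset_of_not_disjoint hq hmn hDE hxD⟩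

theorem VTaib_eq_top_of_tendsto [CompactSpace (RoI K)] (hq : 1 ≤ q) {f : RoI K → ℝ}
    {D : ℕ → Set (RoI K)} (hD : ∀ k, IsDisc K q (D k)) (hdisj : Pairwise (Disjoint on D))
    {x y : ℕ → RoI K} (hx : ∀ k, x k ∈ D k) (hy : ∀ k, y k ∈ D k)
    (h : Tendsto (fun N => ∑ k ∈ Finset.range N, (f (x k) - f (y k))) atTop atTop) :
    VTaib K q f = ⊤ := by
  classical
  have hinj : Injective D := fun j k hjk => by_contra fun hne =>
    Set.not_disjoint_iff.mpr ⟨x j, hx j, hjk ▸ hx j⟩ (hdisj hne)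
  refine top_le_iff.mp (le_of_tendsto' (ENNReal.tendsto_ofReal_atTop.comp h) fun N => ?_)
  obtain ⟨P, hP, hDP⟩ := exists_isTaibPartition_superset hq ((Finset.range N).image D)
    (by simpa using fun k _ => hD k) (by
      simp only [Finset.coe_image]
      rintro _ ⟨j, -, rfl⟩ _ ⟨k, -, rfl⟩ hjk
      exact hdisj fun h => hjk (congrArg D h))
  let osc (E : Set (RoI K)) : ℝ≥0∞ := ⨆ a ∈ E, ⨆ b ∈ E, ENNReal.ofReal (f a - f b)
  calc ENNReal.ofReal (∑ k ∈ Finset.range N, (f (x k) - f (y k)))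
      ≤ ∑ k ∈ Finset.range N, ENNReal.ofReal (f (x k) - f (y k)) :=
        Finset.le_sum_of_subadditive _ ENNReal.ofReal_zero.le
          (fun _ _ => ENNReal.ofReal_add_le) _ _
    _ ≤ ∑ k ∈ Finset.range N, osc (D k) :=
        Finset.sum_le_sum fun k _ =>
          le_iSup₂_of_le (x k) (hx k) (le_iSup₂_of_le (y k) (hy k) le_rfl)
    _ = ∑ E ∈ (Finset.range N).image D, osc E := (Finset.sum_image hinj.injOn).symm
    _ ≤ VPi K f P := Finset.sum_le_sum_of_subset hDP
    _ ≤ VTaib K q f := le_iSup (fun P : {P // IsTaibPartition K q P} => VPi K f P.1) ⟨P, hP⟩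

section Uniformizer

variable {π : RoI K}

theorem norm_pow_uniformizer (hπ : ‖(π : K)‖ = (q : ℝ)⁻¹) (n : ℕ) :
    ‖((π ^ n : RoI K) : K)‖ = (q : ℝ) ^ (-(n : ℤ)) := by
  simp [hπ, zpow_neg]

theorem norm_eq_of_mem_disc_pow (hq : 1 < q) (hπ : ‖(π : K)‖ = (q : ℝ)⁻¹) {k : ℕ}
    {x : RoI K} (hx : x ∈ disc K q (π ^ k) (k + 1)) :
    ‖(x : K)‖ = (q : ℝ) ^ (-(k : ℤ)) := by
  have hlt : ‖(x : K) - (π ^ k : RoI K)‖ < ‖((π ^ k : RoI K) : K)‖ := by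
    rw [norm_pow_uniformizer hπ]
    exact hx.trans_lt (zpow_lt_zpow_right₀ (by exact_mod_cast hq) (by omega))
  rw [← sub_add_cancel (x : K) (π ^ k : RoI K),
    IsUltrametricDist.norm_add_eq_max_of_norm_ne_norm hlt.ne, max_eq_right hlt.le,
    norm_pow_uniformizer hπ]

theorem pairwise_disjoint_disc_pow (hq : 1 < q) (hπ : ‖(π : K)‖ = (q : ℝ)⁻¹) :
    Pairwise (Disjoint on fun k => disc K q (π ^ k) (k + 1)) := by
  intro j k hjk
  refine Set.disjoint_left.mpr fun x hxj hxk => hjk ?_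
  have h := (norm_eq_of_mem_disc_pow hq hπ hxj).symm.trans (norm_eq_of_mem_disc_pow hq hπ hxk)
  have := zpow_right_injective₀ (by positivity) (by exact_mod_cast hq.ne') h
  omega

theorem norm_pow_add_pow_succ_sub_pow (hπ : ‖(π : K)‖ = (q : ℝ)⁻¹) (k : ℕ) :
    ‖((π ^ k + π ^ (k + 1) : RoI K) : K) - (π ^ k : RoI K)‖ =
      (q : ℝ) ^ (-((k + 1 : ℕ) : ℤ)) := by
  rw [← norm_pow_uniformizer hπ]
  push_cast
  ring_nf

end Uniformizer

end NAKoksma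

namespace NAKoksma

variable (K : Type*) [NontriviallyNormedField K] [IsUltrametricDist K] (q : ℕ) [MeasurableSpace K]
  (π : RoI K)

variable [LocallyCompactSpace K] [BorelSpace K]

theorem exists_continuous_with_infinite_VTaib
    (hq : 1 < q)
    (hπ : ‖(π : K)‖ = (q : ℝ)⁻¹) :
    ∃ f : RoI K → ℝ, Continuous f ∧ VTaib K q f = ⊤ := by
  set D : ℕ → Set (RoI K) := fun k => disc K q (π ^ k) (k + 1)
  set E : ℕ → Set (RoI K) := fun k => disc K q (π ^ k) (k + 2)
  set y : ℕ → RoI K := fun k => π ^ k + π ^ (k + 1)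
  have hq₀ : 0 < q := by omega
  have hD : Pairwise (Function.onFun Disjoint D) := pairwise_disjoint_disc_pow hq hπ
  have hED : ∀ k, E k ⊆ D k := fun k => disc_subset_disc hq.le _ (by omega)
  have hE : Pairwise (Function.onFun Disjoint E) := fun j k hjk =>
    (hD hjk).mono (hED j) (hED k)
  have hyD : ∀ k, y k ∈ D k := fun k => (norm_pow_add_pow_succ_sub_pow hπ k).le
  have hyE : ∀ j k, y k ∉ E j := by
    intro j k hy
    obtain rfl | hjk := eq_or_ne j k
    · exact ((norm_pow_add_pow_succ_sub_pow hπ j).symm.trans_le hy).not_gt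
        (zpow_lt_zpow_right₀ (by exact_mod_cast hq) (by omega))
    · exact Set.disjoint_left.mp (hD hjk) (hED j hy) (hyD k)
  refine ⟨fun x => ∑' k, (E k).indicator (fun _ => 1 / ((k : ℝ) + 1)) x,
    continuous_tsum_indicator (fun k => isClopen_disc hq₀ _ _) hE
      tendsto_one_div_add_atTop_nhds_zero_nat,
    VTaib_eq_top_of_tendsto hq.le (fun k => ⟨_, _, rfl⟩) hD
      (fun k => hED k (mem_disc_self hq₀ _ _)) hyD ?_⟩
  simpa [tsum_indicator_apply_of_mem hE _ (mem_disc_self hq₀ _ _),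
    Set.indicator_of_notMem (hyE _ _)] using Real.tendsto_sum_range_one_div_nat_succ_atTop

end NAKoksma
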